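/- arXiv:2408.13637 — 2 statements merged into one kernel-verified Lean document; each statement's English description precedes it below -/
import Mathlib

section
/- The reduction from Dominating Set is correct: a graph G = (V,E) with |V| = n has a dominating set of size at most κ if and only if the associated temporal election instance (n agents, n projects, κ timesteps, with agent i approving at every timestep the projects corresponding to vertex v_i and its neighbors) admits an outcome giving every agent utility at least 1. -/
/-- The utility of agent `i` under outcome `o`. -/
noncomputable def util {P : Type*} {n ℓ : ℕ}
    (S : Fin n → Fin ℓ → Finset P) (i : Fin n) (o : Fin ℓ → P) : ℕ :=
  Nat.card {t : Fin ℓ // o t ∈ S i t}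

/-!
With approvals that do not depend on time, an outcome satisfies every agent exactly when its
set of selected projects meets every agent's approval set, so the election problem is Hitting
Set with at most `ℓ` projects. In the instance built from `G`, agent `i` approves the closed
neighbourhood of `v_i`, and a set meets every closed neighbourhood iff it is dominating.
-/

open Finset

theorem one_le_util_iff {P : Type*} {n ℓ : ℕ} (S : Fin n → Fin ℓ → Finset P) (i : Fin n)
    (o : Fin ℓ → P) : 1 ≤ util S i o ↔ ∃ t, o t ∈ S i t := by
  rw [util, Nat.one_le_iff_ne_zero, Nat.card_ne_zero, nonempty_subtype]
  exact and_iff_left inferInstance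

theorem Finset.exists_fin_seq_covering {α : Type*} [Nonempty α] {ℓ : ℕ} (D : Finset α)
    (hD : #D ≤ ℓ) : ∃ o : Fin ℓ → α, ∀ u ∈ D, ∃ t, o t = u := by
  refine ⟨fun t => D.toList.getD t (Classical.arbitrary α), fun u hu => ?_⟩
  obtain ⟨k, hk, rfl⟩ := List.getElem_of_mem (mem_toList.mpr hu)
  exact ⟨⟨k, hk.trans_le (by simpa using hD)⟩, by simp [List.getElem?_eq_getElem hk]⟩

theorem exists_forall_one_le_util_iff_exists_hittingSet {P : Type*} [Nonempty P] {n ℓ : ℕ}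
    (S : Fin n → Fin ℓ → Finset P) (A : Fin n → Finset P) (hS : ∀ i t, S i t = A i) :
    (∃ o : Fin ℓ → P, ∀ i, 1 ≤ util S i o) ↔ ∃ D : Finset P, #D ≤ ℓ ∧ ∀ i, ∃ p ∈ D, p ∈ A i := by
  classical
  simp only [one_le_util_iff, hS]
  constructor
  · rintro ⟨o, ho⟩
    refine ⟨univ.image o, card_image_le.trans (card_fin ℓ).le, fun i => ?_⟩
    obtain ⟨t, ht⟩ := ho i
    exact ⟨o t, mem_image_of_mem o (mem_univ t), ht⟩
  · rintro ⟨D, hD, hhit⟩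
    obtain ⟨o, ho⟩ := D.exists_fin_seq_covering hD
    refine ⟨o, fun i => ?_⟩
    obtain ⟨p, hpD, hp⟩ := hhit i
    obtain ⟨t, rfl⟩ := ho p hpD
    exact ⟨t, hp⟩

theorem dominatingSet_reduction_general (n κ : ℕ) (hn : 1 ≤ n)
    (G : SimpleGraph (Fin n)) [DecidableRel G.Adj]
    (S : Fin n → Fin κ → Finset (Fin n))
    (hS : ∀ (i : Fin n) (t : Fin κ),
      S i t = Finset.univ.filter (fun j => i = j ∨ G.Adj i j)) :
    (∃ D : Finset (Fin n), D.card ≤ κ ∧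
        ∀ v : Fin n, v ∈ D ∨ ∃ u ∈ D, G.Adj v u) ↔
      (∃ o : Fin κ → Fin n, ∀ i : Fin n, 1 ≤ util S i o) := by
  have : Nonempty (Fin n) := ⟨⟨0, hn⟩⟩
  rw [exists_forall_one_le_util_iff_exists_hittingSet S _ hS]
  have hdom : ∀ (D : Finset (Fin n)) (v : Fin n),
      (v ∈ D ∨ ∃ u ∈ D, G.Adj v u) ↔ ∃ u ∈ D, u ∈ univ.filter (fun j => v = j ∨ G.Adj v j) := by
    intro D v
    simp only [mem_filter, mem_univ, true_and, and_or_left, exists_or, exists_eq_right']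
  simp only [hdom]

/-- Correctness of the Dominating Set reduction: a graph `G` on `n` vertices has
a dominating set of size at most `κ` iff the temporal election instance with `n`
agents, `n` projects, `κ` timesteps, where agent `i` approves at every timestep
the projects corresponding to vertex `v_i` and its neighbors, admits an outcome
giving every agent utility at least 1. -/
theorem dominatingSet_reduction (n κ : ℕ) (hn : 1 ≤ n) (hκ : 1 ≤ κ)
    (G : SimpleGraph (Fin n)) [DecidableRel G.Adj]
    (S : Fin n → Fin κ → Finset (Fin n))
    (hS : ∀ (i : Fin n) (t : Fin κ),
      S i t = Finset.univ.filter (fun j => i = j ∨ G.Adj i j)) :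
    (∃ D : Finset (Fin n), D.card ≤ κ ∧
        ∀ v : Fin n, v ∈ D ∨ ∃ u ∈ D, G.Adj v u) ↔
      (∃ o : Fin κ → Fin n, ∀ i : Fin n, 1 ≤ util S i o) :=
  dominatingSet_reduction_general n κ hn G S hS
end

section
/- Strong PJR implies proportionality: if an outcome o provides strong proportional justified representation, then for every agent i, u_i(o) ≥ ⌊μ_i/n⌋. -/
/-- `μ_i`: the number of timesteps at which agent `i` approves at least one project. -/
noncomputable def mu {P : Type*} {n ℓ : ℕ}
    (S : Fin n → Fin ℓ → Finset P) (i : Fin n) : ℕ :=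
  Nat.card {t : Fin ℓ // S i t ≠ ∅}

/-! An agent on her own agrees in exactly the `μ_i` timesteps where she approves something, and
a group of size `1 ≥ ⌊μ_i/n⌋·n/μ_i` is large enough for strong PJR to grant her `⌊μ_i/n⌋`
timesteps at which the outcome is approved by her. -/

lemma Nat.cast_div_mul_div_le_one {K : Type*} [Field K] [LinearOrder K] [IsStrictOrderedRing K]
    {m : ℕ} (n : ℕ) (hm : 0 < m) : ((m / n : ℕ) : K) * n / m ≤ 1 := by
  rw [div_le_one (by exact_mod_cast hm)]
  exact_mod_cast Nat.div_mul_le_self m n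

section Election

variable {P : Type*} {n ℓ : ℕ} (S : Fin n → Fin ℓ → Finset P) (i : Fin n)

open Finset

lemma mu_eq_card_filter : mu S i = #{t | (S i t).Nonempty} := by
  simp only [mu, Nat.card_eq_fintype_card, Fintype.card_subtype, ← nonempty_iff_ne_empty]

lemma exists_card_eq_mu_forall_nonempty :
    ∃ T : Finset (Fin ℓ), #T = mu S i ∧ ∀ t ∈ T, (S i t).Nonempty :=
  ⟨_, (mu_eq_card_filter S i).symm, fun _ ht => (mem_filter.1 ht).2⟩

variable [DecidableEq P]

lemma util_eq_card_filter (o : Fin ℓ → P) :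
    util S i o = #{t | o t ∈ S i t} := by
  rw [util, Nat.card_eq_fintype_card, Fintype.card_subtype]

lemma card_le_util {o : Fin ℓ → P} {T : Finset (Fin ℓ)} (hT : ∀ t ∈ T, o t ∈ S i t) :
    #T ≤ util S i o := by
  rw [util_eq_card_filter]
  exact card_le_card fun t ht => by simpa using hT t ht

end Election

theorem strongPJR_implies_prop_general {P : Type*} {n ℓ : ℕ}
    (S : Fin n → Fin ℓ → Finset P) (o : Fin ℓ → P)
    (hPJR : ∀ (s k : ℕ), 0 < k → ∀ Nstar : Finset (Fin n),
      ((s : ℚ) * n) / (k : ℚ) ≤ (Nstar.card : ℚ) →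
      (∃ T' : Finset (Fin ℓ), T'.card = k ∧
        ∀ t ∈ T', ∃ p : P, ∀ i ∈ Nstar, p ∈ S i t) →
      ∃ Tstar : Finset (Fin ℓ), Tstar.card = s ∧
        ∀ t ∈ Tstar, ∃ i ∈ Nstar, o t ∈ S i t) :
    ∀ i : Fin n, mu S i / n ≤ util S i o := by
  intro i
  classical
  rcases Nat.eq_zero_or_pos (mu S i) with hμ | hμ
  · simp [hμ]
  obtain ⟨T, hTcard, hT⟩ := exists_card_eq_mu_forall_nonempty S i
  obtain ⟨Tstar, hTstar, hrep⟩ := hPJR (mu S i / n) (mu S i) hμ {i}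
    (by simpa using Nat.cast_div_mul_div_le_one (K := ℚ) n hμ)
    ⟨T, hTcard, fun t ht => (hT t ht).imp fun _ hp => by simpa using hp⟩
  rw [← hTstar]
  exact card_le_util S i fun t ht => by simpa using hrep t ht

/-- Strong PJR implies proportionality: if outcome `o` provides strong
proportional justified representation — for all `s` and `k ≥ 1` and every group
`N*` with `|N*| ≥ s·n/k` (over ℚ) that agrees in `k` timesteps, there are `s`
timesteps at which the selected project is approved by some member of `N*` —
then `u_i(o) ≥ ⌊μ_i/n⌋` for every agent `i`. -/
theorem strongPJR_implies_prop {P : Type*} {n ℓ : ℕ} (hn : 1 ≤ n)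
    (S : Fin n → Fin ℓ → Finset P) (o : Fin ℓ → P)
    (hPJR : ∀ (s k : ℕ), 0 < k → ∀ Nstar : Finset (Fin n),
      ((s : ℚ) * n) / (k : ℚ) ≤ (Nstar.card : ℚ) →
      (∃ T' : Finset (Fin ℓ), T'.card = k ∧
        ∀ t ∈ T', ∃ p : P, ∀ i ∈ Nstar, p ∈ S i t) →
      ∃ Tstar : Finset (Fin ℓ), Tstar.card = s ∧
        ∀ t ∈ Tstar, ∃ i ∈ Nstar, o t ∈ S i t) :
    ∀ i : Fin n, mu S i / n ≤ util S i o :=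
  strongPJR_implies_prop_general S o hPJR
end
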